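/- arXiv:2405.06979 — 3 statements merged into one kernel-verified Lean document; each statement's English description precedes it below -/
import Mathlib

section
/- One-step descent under the weak growth condition: Let E be a real Hilbert space and f : E → ℝ an L-smooth function (L > 0) with gradient ∇f. Fix θ ∈ E, and let g : Ω → E be a square-integrable random vector on a probability space (Ω, P) with E[g] = ∇f(θ) and E[‖g − ∇f(θ)‖²] ≤ (c/2)‖∇f(θ)‖² + σ², where c ≥ 0 and σ ≥ 0. If the step size η > 0 satisfies ηL(1 + c/2) ≤ 1, then E[f(θ − η g)] ≤ f(θ) − (η/2)‖∇f(θ)‖² + (η² L σ²)/2. -/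
open MeasureTheory

/-!
Smoothness gives the two-sided quadratic bound
`|f (x + v) - f x - ⟪∇f x, v⟫| ≤ L/2 ‖v‖²`; its lower half makes `f (θ - η g)` integrable and its
upper half, integrated with `v = -η g`, gives `E f(θ - η g) ≤ f θ - η ‖∇f θ‖² + L η²/2 E‖g‖²`.
By the bias-variance identity `E‖g‖² = E‖g - ∇f θ‖² + ‖∇f θ‖² ≤ (1 + c/2) ‖∇f θ‖² + σ²`, and the
step-size condition lets half of the decrease `η ‖∇f θ‖²` absorb the `(1 + c/2) ‖∇f θ‖²` term.
-/

section Smooth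

variable {E : Type*} [NormedAddCommGroup E] [InnerProductSpace ℝ E] [CompleteSpace E]
  {f : E → ℝ} {f' : E → E} {L : ℝ}

theorem abs_sub_sub_inner_le_of_lipschitz_gradient (hgrad : ∀ x, HasGradientAt f (f' x) x)
    (hsmooth : ∀ x y, ‖f' x - f' y‖ ≤ L * ‖x - y‖) (x v : E) :
    |f (x + v) - f x - inner ℝ (f' x) v| ≤ L / 2 * ‖v‖ ^ 2 := by
  set φ : ℝ → ℝ := fun t => f (x + t • v) - f x - t * inner ℝ (f' x) v
  have hφ : ∀ t, HasDerivAt φ (inner ℝ (f' (x + t • v) - f' x) v) t := by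
    intro t
    have hline : HasDerivAt (fun t : ℝ => x + t • v) v t := by
      simpa using ((hasDerivAt_id t).smul_const v).const_add x
    have := (((hgrad (x + t • v)).hasFDerivAt.comp_hasDerivAt t hline).sub_const (f x)).fun_sub
      ((hasDerivAt_id t).mul_const (inner ℝ (f' x) v))
    simpa [inner_sub_left] using this
  have hB : ∀ t, HasDerivAt (fun t : ℝ => L / 2 * ‖v‖ ^ 2 * t ^ 2) (L * ‖v‖ ^ 2 * t) t := fun t =>
    ((hasDerivAt_pow 2 t).const_mul (L / 2 * ‖v‖ ^ 2)).congr_deriv (by push_cast; ring)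
  have hbound : ∀ t ∈ Set.Ico (0 : ℝ) 1, ‖inner ℝ (f' (x + t • v) - f' x) v‖ ≤ L * ‖v‖ ^ 2 * t := by
    intro t ht
    calc ‖inner ℝ (f' (x + t • v) - f' x) v‖ ≤ ‖f' (x + t • v) - f' x‖ * ‖v‖ :=
          norm_inner_le_norm _ _
      _ ≤ L * ‖t • v‖ * ‖v‖ := by
          gcongr
          simpa using hsmooth (x + t • v) x
      _ = L * ‖v‖ ^ 2 * t := by
          rw [norm_smul, Real.norm_of_nonneg ht.1]
          ring
  have := image_norm_le_of_norm_deriv_right_le_deriv_boundary (a := 0) (b := 1)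
    (fun t _ => (hφ t).continuousAt.continuousWithinAt) (fun t _ => (hφ t).hasDerivWithinAt)
    (by simp [φ]) hB hbound (Set.right_mem_Icc.2 zero_le_one)
  simpa [φ] using this

end Smooth

section Moments

variable {Ω : Type*} [MeasurableSpace Ω] {P : Measure Ω} [IsProbabilityMeasure P]
  {E : Type*} [NormedAddCommGroup E] [InnerProductSpace ℝ E] [CompleteSpace E]

theorem integral_norm_sq_eq_integral_norm_sub_integral_sq_add {X : Ω → E} (hX : MemLp X 2 P) :
    ∫ ω, ‖X ω‖ ^ 2 ∂P = ∫ ω, ‖X ω - ∫ ω', X ω' ∂P‖ ^ 2 ∂P + ‖∫ ω, X ω ∂P‖ ^ 2 := by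
  set m := ∫ ω, X ω ∂P
  have hX1 : Integrable X P := hX.integrable one_le_two
  have hXsq : Integrable (fun ω => ‖X ω‖ ^ 2) P := hX.integrable_norm_pow two_ne_zero
  have hexpand : ∀ ω, ‖X ω - m‖ ^ 2 = ‖X ω‖ ^ 2 - 2 * inner ℝ m (X ω) + ‖m‖ ^ 2 := fun ω => by
    rw [norm_sub_sq_real, real_inner_comm]
  simp_rw [hexpand]
  rw [integral_add (hXsq.sub' ((hX1.const_inner m).const_mul 2)) (integrable_const _),
    integral_sub hXsq ((hX1.const_inner m).const_mul 2), integral_const_mul, integral_inner hX1,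
    real_inner_self_eq_norm_sq, integral_const]
  simp only [probReal_univ, one_smul]
  ring

end Moments

section ExpectedDescent

variable {Ω : Type*} [MeasurableSpace Ω] {P : Measure Ω}
  {E : Type*} [NormedAddCommGroup E] [InnerProductSpace ℝ E] [CompleteSpace E]
  {f : E → ℝ} {f' : E → E} {L : ℝ}

theorem integrable_comp_add_of_lipschitz_gradient [IsFiniteMeasure P]
    (hgrad : ∀ x, HasGradientAt f (f' x) x) (hsmooth : ∀ x y, ‖f' x - f' y‖ ≤ L * ‖x - y‖)
    (x : E) {V : Ω → E} (hV : MemLp V 2 P) :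
    Integrable (fun ω => f (x + V ω)) P := by
  have hf : Continuous f := Differentiable.continuous fun y => (hgrad y).differentiableAt
  have hlin : Integrable (fun ω => f x + inner ℝ (f' x) (V ω)) P :=
    (integrable_const _).add ((hV.integrable one_le_two).const_inner _)
  have hrem : Integrable (fun ω => f (x + V ω) - (f x + inner ℝ (f' x) (V ω))) P := by
    refine ((hV.integrable_norm_pow two_ne_zero).const_mul (L / 2)).mono' ?_ ?_
    · exact (hf.comp_aestronglyMeasurable (hV.1.const_add x)).sub hlin.1
    · refine ae_of_all _ fun ω => ?_
      rw [Real.norm_eq_abs, ← sub_sub]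
      exact abs_sub_sub_inner_le_of_lipschitz_gradient hgrad hsmooth x (V ω)
  simpa using hrem.fun_add hlin

theorem integral_comp_add_le_of_lipschitz_gradient [IsProbabilityMeasure P]
    (hgrad : ∀ x, HasGradientAt f (f' x) x) (hsmooth : ∀ x y, ‖f' x - f' y‖ ≤ L * ‖x - y‖)
    (x : E) {V : Ω → E} (hV : MemLp V 2 P) :
    ∫ ω, f (x + V ω) ∂P ≤
      f x + inner ℝ (f' x) (∫ ω, V ω ∂P) + L / 2 * ∫ ω, ‖V ω‖ ^ 2 ∂P := by
  have hV1 : Integrable V P := hV.integrable one_le_two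
  have hlin : Integrable (fun ω => f x + inner ℝ (f' x) (V ω)) P :=
    (integrable_const _).add (hV1.const_inner _)
  have hquad : Integrable (fun ω => L / 2 * ‖V ω‖ ^ 2) P :=
    (hV.integrable_norm_pow two_ne_zero).const_mul _
  calc ∫ ω, f (x + V ω) ∂P
      ≤ ∫ ω, (f x + inner ℝ (f' x) (V ω) + L / 2 * ‖V ω‖ ^ 2) ∂P := by
        refine integral_mono (integrable_comp_add_of_lipschitz_gradient hgrad hsmooth x hV)
          (hlin.add hquad) fun ω => ?_
        have := (abs_le.1 (abs_sub_sub_inner_le_of_lipschitz_gradient hgrad hsmooth x (V ω))).2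
        linarith
    _ = f x + inner ℝ (f' x) (∫ ω, V ω ∂P) + L / 2 * ∫ ω, ‖V ω‖ ^ 2 ∂P := by
        rw [integral_add hlin hquad, integral_add (integrable_const _) (hV1.const_inner _),
          integral_inner hV1, integral_const_mul, integral_const]
        simp only [probReal_univ, one_smul]

end ExpectedDescent

theorem one_step_descent_weak_growth_general
    {E : Type*} [NormedAddCommGroup E] [InnerProductSpace ℝ E] [CompleteSpace E]
    {Ω : Type*} [MeasurableSpace Ω] (P : Measure Ω) [IsProbabilityMeasure P]
    (f : E → ℝ) (f' : E → E) (L : ℝ) (hL : 0 < L)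
    (hgrad : ∀ x, HasGradientAt f (f' x) x)
    (hsmooth : ∀ x y, ‖f' x - f' y‖ ≤ L * ‖x - y‖)
    (θ : E) (g : Ω → E) (hg2 : MemLp g 2 P)
    (hmean : ∫ ω, g ω ∂P = f' θ)
    (c σ : ℝ)
    (hvar : ∫ ω, ‖g ω - f' θ‖ ^ 2 ∂P ≤ c / 2 * ‖f' θ‖ ^ 2 + σ ^ 2)
    (η : ℝ) (hη : 0 < η) (hstep : η * L * (1 + c / 2) ≤ 1) :
    ∫ ω, f (θ - η • g ω) ∂P ≤
      f θ - η / 2 * ‖f' θ‖ ^ 2 + η ^ 2 * L * σ ^ 2 / 2 := by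
  have hdesc := integral_comp_add_le_of_lipschitz_gradient hgrad hsmooth θ
    (V := fun ω => -(η • g ω)) (hg2.const_smul η).neg
  simp only [← sub_eq_add_neg, integral_neg, integral_smul, hmean, norm_neg, norm_smul, mul_pow,
    Real.norm_eq_abs, sq_abs, integral_const_mul, inner_neg_right, inner_smul_right,
    real_inner_self_eq_norm_sq] at hdesc
  have hsecond : ∫ ω, ‖g ω‖ ^ 2 ∂P ≤ (1 + c / 2) * ‖f' θ‖ ^ 2 + σ ^ 2 := by
    rw [integral_norm_sq_eq_integral_norm_sub_integral_sq_add hg2, hmean]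
    linarith
  nlinarith [mul_le_mul_of_nonneg_left hsecond (by positivity : 0 ≤ L / 2 * η ^ 2),
    mul_le_mul_of_nonneg_left hstep (by positivity : 0 ≤ η / 2 * ‖f' θ‖ ^ 2)]

/-- One-step descent inequality under the weak growth condition. -/
theorem one_step_descent_weak_growth
    {E : Type*} [NormedAddCommGroup E] [InnerProductSpace ℝ E] [CompleteSpace E]
    {Ω : Type*} [MeasurableSpace Ω] (P : Measure Ω) [IsProbabilityMeasure P]
    (f : E → ℝ) (f' : E → E) (L : ℝ) (hL : 0 < L)
    (hgrad : ∀ x, HasGradientAt f (f' x) x)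
    (hsmooth : ∀ x y, ‖f' x - f' y‖ ≤ L * ‖x - y‖)
    (θ : E) (g : Ω → E) (hg2 : MemLp g 2 P)
    (hmean : ∫ ω, g ω ∂P = f' θ)
    (c σ : ℝ) (hc : 0 ≤ c) (hσ : 0 ≤ σ)
    (hvar : ∫ ω, ‖g ω - f' θ‖ ^ 2 ∂P ≤ c / 2 * ‖f' θ‖ ^ 2 + σ ^ 2)
    (η : ℝ) (hη : 0 < η) (hstep : η * L * (1 + c / 2) ≤ 1) :
    ∫ ω, f (θ - η • g ω) ∂P ≤
      f θ - η / 2 * ‖f' θ‖ ^ 2 + η ^ 2 * L * σ ^ 2 / 2 :=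
  one_step_descent_weak_growth_general P f f' L hL hgrad hsmooth θ g hg2 hmean c σ hvar η hη hstep
end

section
/- One-step contraction under the Polyak-Łojasiewicz condition: Let E be a real Hilbert space and f : E → ℝ an L-smooth function (L > 0) with gradient ∇f satisfying the Polyak-Łojasiewicz condition with parameter μ > 0 and attaining its minimum at θ*. Fix θ ∈ E, and let g : Ω → E be a square-integrable random vector on a probability space (Ω, P) with E[g] = ∇f(θ) and E[‖g − ∇f(θ)‖²] ≤ (c/2)‖∇f(θ)‖² + σ², where c ≥ 0 and σ ≥ 0. If the step size η > 0 satisfies ηL(1 + c/2) ≤ 1, then E[f(θ − η g)] − f(θ*) ≤ (1 − ημ)(f(θ) − f(θ*)) + (η² L σ²)/2. -/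
/-!
The descent lemma `f (x + v) ≤ f x + ⟪∇f x, v⟫ + L/2 ‖v‖²` (mean value theorem plus
Cauchy–Schwarz) holds pointwise for `v = -η g ω`; integrating it and splitting the second moment
`E‖g‖² = E‖g - ∇f θ‖² + ‖∇f θ‖²` bounds `E f(θ - η g)` by
`f θ - η ‖∇f θ‖² + L η²/2 ((1 + c/2) ‖∇f θ‖² + σ²)`. The step-size condition absorbs the
quadratic term into half of the linear one, and the PL inequality turns the remaining
`-η/2 ‖∇f θ‖²` into `-η μ (f θ - f θ*)`.
-/

open MeasureTheory

section

variable {E : Type*} [NormedAddCommGroup E] [InnerProductSpace ℝ E] [CompleteSpace E]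

theorem HasGradientAt.comp_add_smul {f : E → ℝ} {f' x v : E} {t : ℝ}
    (h : HasGradientAt f f' (x + t • v)) :
    HasDerivAt (fun s : ℝ => f (x + s • v)) (inner ℝ f' v) t := by
  have hline : HasDerivAt (fun s : ℝ => x + s • v) v t := by
    simpa using ((hasDerivAt_id t).smul_const v).const_add x
  have := h.hasFDerivAt.comp_hasDerivAt t hline
  simp only [InnerProductSpace.toDual_apply_apply] at this
  exact this

theorem apply_add_le_of_lipschitz_gradient {f : E → ℝ} {f' : E → E} {L : ℝ}
    (hgrad : ∀ x, HasGradientAt f (f' x) x)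
    (hsmooth : ∀ x y, ‖f' x - f' y‖ ≤ L * ‖x - y‖) (x v : E) :
    f (x + v) ≤ f x + inner ℝ (f' x) v + L / 2 * ‖v‖ ^ 2 := by
  set ψ : ℝ → ℝ := fun t => f (x + t • v) - t * inner ℝ (f' x) v - t ^ 2 * (L / 2 * ‖v‖ ^ 2)
  set ψ' : ℝ → ℝ := fun t => inner ℝ (f' (x + t • v) - f' x) v - t * (L * ‖v‖ ^ 2)
  have hψ : ∀ t, HasDerivAt ψ (ψ' t) t := fun t => by
    refine (((hgrad (x + t • v)).comp_add_smul.sub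
      ((hasDerivAt_id t).mul_const (inner ℝ (f' x) v))).sub
      ((hasDerivAt_pow 2 t).mul_const (L / 2 * ‖v‖ ^ 2))).congr_deriv ?_
    simp only [ψ', inner_sub_left]
    ring
  obtain ⟨t, ⟨ht₀, -⟩, hslope⟩ := exists_hasDerivAt_eq_slope ψ ψ' zero_lt_one
    (fun t _ => (hψ t).continuousAt.continuousWithinAt) (fun t _ => hψ t)
  have hψ'_nonpos : ψ' t ≤ 0 := by
    have hlip : ‖f' (x + t • v) - f' x‖ ≤ L * (t * ‖v‖) := by
      simpa [norm_smul, abs_of_pos ht₀] using hsmooth (x + t • v) x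
    have := (real_inner_le_norm _ v).trans (mul_le_mul_of_nonneg_right hlip (norm_nonneg v))
    simp only [ψ']
    linarith
  rw [hslope] at hψ'_nonpos
  norm_num [ψ] at hψ'_nonpos
  linarith

variable {Ω : Type*} [MeasurableSpace Ω] {P : Measure Ω} [IsProbabilityMeasure P] {g : Ω → E}

theorem integral_norm_sub_integral_sq (hg : MemLp g 2 P) :
    ∫ ω, ‖g ω - ∫ ω', g ω' ∂P‖ ^ 2 ∂P = ∫ ω, ‖g ω‖ ^ 2 ∂P - ‖∫ ω, g ω ∂P‖ ^ 2 := by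
  set m := ∫ ω, g ω ∂P
  have hint : Integrable g P := hg.integrable one_le_two
  have hsq : Integrable (fun ω => ‖g ω‖ ^ 2) P := hg.norm.integrable_sq
  have hinner : Integrable (fun ω => 2 * inner ℝ m (g ω)) P := (hint.const_inner m).const_mul 2
  simp_rw [norm_sub_sq_real, real_inner_comm m]
  rw [integral_add (hsq.sub hinner : Integrable (fun ω => _ - _) P) (integrable_const _),
    integral_sub hsq hinner, integral_const_mul, integral_inner hint, real_inner_self_eq_norm_sq]
  simp
  ring

theorem integral_comp_sub_smul_le {f : E → ℝ} {f' : E → E} {L : ℝ}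
    (hgrad : ∀ x, HasGradientAt f (f' x) x)
    (hsmooth : ∀ x y, ‖f' x - f' y‖ ≤ L * ‖x - y‖) (hf : BddBelow (Set.range f))
    (hg : MemLp g 2 P) (x : E) (η : ℝ) :
    ∫ ω, f (x - η • g ω) ∂P ≤
      f x - η * inner ℝ (f' x) (∫ ω, g ω ∂P) + L / 2 * η ^ 2 * ∫ ω, ‖g ω‖ ^ 2 ∂P := by
  obtain ⟨b, hb⟩ := hf
  have hint : Integrable g P := hg.integrable one_le_two
  have hle : ∀ ω, f (x - η • g ω) ≤
      f x - η * inner ℝ (f' x) (g ω) + L / 2 * η ^ 2 * ‖g ω‖ ^ 2 := fun ω => by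
    have := apply_add_le_of_lipschitz_gradient hgrad hsmooth x (-(η • g ω))
    rw [← sub_eq_add_neg, inner_neg_right, inner_smul_right, norm_neg, norm_smul, mul_pow,
      Real.norm_eq_abs, sq_abs] at this
    linarith
  have hlin : Integrable (fun ω => f x - η * inner ℝ (f' x) (g ω)) P :=
    (integrable_const _).sub ((hint.const_inner _).const_mul η)
  have hsq : Integrable (fun ω => L / 2 * η ^ 2 * ‖g ω‖ ^ 2) P :=
    hg.norm.integrable_sq.const_mul _
  have hK : Integrable
      (fun ω => f x - η * inner ℝ (f' x) (g ω) + L / 2 * η ^ 2 * ‖g ω‖ ^ 2) P := hlin.add hsq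
  have hmeas : AEStronglyMeasurable (fun ω => f (x - η • g ω)) P :=
    (continuous_iff_continuousAt.2 fun x => (hgrad x).continuousAt).comp_aestronglyMeasurable
      (aestronglyMeasurable_const.sub (hint.aestronglyMeasurable.const_smul η))
  have hfint : Integrable (fun ω => f (x - η • g ω)) P :=
    integrable_of_le_of_le hmeas (ae_of_all _ fun ω => hb ⟨_, rfl⟩) (ae_of_all _ hle)
      (integrable_const b) hK
  refine (integral_mono hfint hK hle).trans_eq ?_
  rw [integral_add hlin hsq,
    integral_sub (integrable_const _) ((hint.const_inner _).const_mul η),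
    integral_const_mul, integral_const_mul, integral_inner hint]
  simp

end

theorem one_step_contraction_PL_general
    {E : Type*} [NormedAddCommGroup E] [InnerProductSpace ℝ E] [CompleteSpace E]
    {Ω : Type*} [MeasurableSpace Ω] (P : Measure Ω) [IsProbabilityMeasure P]
    (f : E → ℝ) (f' : E → E) (L μ : ℝ) (hL : 0 < L)
    (hgrad : ∀ x, HasGradientAt f (f' x) x)
    (hsmooth : ∀ x y, ‖f' x - f' y‖ ≤ L * ‖x - y‖)
    (θstar : E) (hmin : ∀ x, f θstar ≤ f x)
    (hPL : ∀ θ, 2 * μ * (f θ - f θstar) ≤ ‖f' θ‖ ^ 2)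
    (θ : E) (g : Ω → E) (hg2 : MemLp g 2 P)
    (hmean : ∫ ω, g ω ∂P = f' θ)
    (c σ : ℝ)
    (hvar : ∫ ω, ‖g ω - f' θ‖ ^ 2 ∂P ≤ c / 2 * ‖f' θ‖ ^ 2 + σ ^ 2)
    (η : ℝ) (hη : 0 < η) (hstep : η * L * (1 + c / 2) ≤ 1) :
    (∫ ω, f (θ - η • g ω) ∂P) - f θstar ≤
      (1 - η * μ) * (f θ - f θstar) + η ^ 2 * L * σ ^ 2 / 2 := by
  have hdesc := integral_comp_sub_smul_le hgrad hsmooth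
    ⟨f θstar, by rintro _ ⟨x, rfl⟩; exact hmin x⟩ hg2 θ η
  have hmoment : ∫ ω, ‖g ω‖ ^ 2 ∂P = ∫ ω, ‖g ω - f' θ‖ ^ 2 ∂P + ‖f' θ‖ ^ 2 := by
    linarith [hmean ▸ integral_norm_sub_integral_sq hg2]
  rw [hmean, real_inner_self_eq_norm_sq, hmoment] at hdesc
  have hPLθ := mul_le_mul_of_nonneg_left (hPL θ) (by positivity : 0 ≤ η / 2)
  calc (∫ ω, f (θ - η • g ω) ∂P) - f θstar
      ≤ f θ - η * ‖f' θ‖ ^ 2 + L / 2 * η ^ 2 * ((1 + c / 2) * ‖f' θ‖ ^ 2 + σ ^ 2)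
          - f θstar := by
        linarith [mul_le_mul_of_nonneg_left hvar (by positivity : 0 ≤ L / 2 * η ^ 2)]
    _ ≤ f θ - η / 2 * ‖f' θ‖ ^ 2 + η ^ 2 * L * σ ^ 2 / 2 - f θstar := by
        linarith [mul_le_mul_of_nonneg_right hstep (by positivity : 0 ≤ η / 2 * ‖f' θ‖ ^ 2)]
    _ ≤ (1 - η * μ) * (f θ - f θstar) + η ^ 2 * L * σ ^ 2 / 2 := by linarith

/-- One-step contraction under the Polyak-Łojasiewicz condition. -/
theorem one_step_contraction_PL
    {E : Type*} [NormedAddCommGroup E] [InnerProductSpace ℝ E] [CompleteSpace E]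
    {Ω : Type*} [MeasurableSpace Ω] (P : Measure Ω) [IsProbabilityMeasure P]
    (f : E → ℝ) (f' : E → E) (L μ : ℝ) (hL : 0 < L) (hμ : 0 < μ)
    (hgrad : ∀ x, HasGradientAt f (f' x) x)
    (hsmooth : ∀ x y, ‖f' x - f' y‖ ≤ L * ‖x - y‖)
    (θstar : E) (hmin : ∀ x, f θstar ≤ f x)
    (hPL : ∀ θ, 2 * μ * (f θ - f θstar) ≤ ‖f' θ‖ ^ 2)
    (θ : E) (g : Ω → E) (hg2 : MemLp g 2 P)
    (hmean : ∫ ω, g ω ∂P = f' θ)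
    (c σ : ℝ) (hc : 0 ≤ c) (hσ : 0 ≤ σ)
    (hvar : ∫ ω, ‖g ω - f' θ‖ ^ 2 ∂P ≤ c / 2 * ‖f' θ‖ ^ 2 + σ ^ 2)
    (η : ℝ) (hη : 0 < η) (hstep : η * L * (1 + c / 2) ≤ 1) :
    (∫ ω, f (θ - η • g ω) ∂P) - f θstar ≤
      (1 - η * μ) * (f θ - f θstar) + η ^ 2 * L * σ ^ 2 / 2 :=
  one_step_contraction_PL_general P f f' L μ hL hgrad hsmooth θstar hmin hPL θ g hg2 hmean c σ hvar
    η hη hstep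
end

section
/- Variance bound for the mixture gradient: Let E be a real Hilbert space, (Ω, P) a probability space, and v ∈ E. Let g_id, g_fr, g_uf : Ω → E be square-integrable random vectors with E[g_id] = E[g_fr] = E[g_uf] = v and with E[‖g_id − v‖²] ≤ σ², E[‖g_fr − v‖²] ≤ (ε/2)‖v‖² + σ², E[‖g_uf − v‖²] ≤ (ν/2)‖v‖² + σ², where σ, ε, ν ≥ 0. For λ, τ ∈ [0,1], define the mixture g = λ g_id + (1−λ)(τ g_fr + (1−τ) g_uf). Then E[g] = v and E[‖g − v‖²] ≤ ((1−λ)(τ ε + (1−τ) ν)/2) ‖v‖² + σ². -/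
/-!
The centred mixture `g - v` is the same convex combination of the centred gradients
`g_id - v`, `g_fr - v`, `g_uf - v`. Since `‖·‖²` is convex, Jensen's inequality bounds
`‖g - v‖²` pointwise by the corresponding combination of squared deviations; integrating and
inserting the three variance bounds gives the claim. The mean is a convex combination of
three copies of `v`.
-/

open MeasureTheory

theorem norm_smul_add_one_sub_smul_sq_le {E : Type*} [SeminormedAddCommGroup E]
    [NormedSpace ℝ E] {t : ℝ} (ht : t ∈ Set.Icc (0 : ℝ) 1) (x y : E) :
    ‖t • x + (1 - t) • y‖ ^ 2 ≤ t * ‖x‖ ^ 2 + (1 - t) * ‖y‖ ^ 2 :=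
  (convexOn_univ_norm.pow (fun _ _ ↦ norm_nonneg _) 2).2 trivial trivial ht.1
    (sub_nonneg.2 ht.2) (add_sub_cancel t 1)

section ConvexCombination

variable {Ω E : Type*} [MeasurableSpace Ω] {P : Measure Ω} [NormedAddCommGroup E]
  [NormedSpace ℝ E] {X Y : Ω → E} {t : ℝ}

theorem integral_smul_add_one_sub_smul_of_integral_eq {v : E} (hX : Integrable X P)
    (hY : Integrable Y P) (hXv : ∫ ω, X ω ∂P = v) (hYv : ∫ ω, Y ω ∂P = v) :
    ∫ ω, t • X ω + (1 - t) • Y ω ∂P = v := by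
  rw [integral_add (f := fun ω ↦ t • X ω) (g := fun ω ↦ (1 - t) • Y ω) (hX.smul t)
    (hY.smul (1 - t)), integral_smul, integral_smul, hXv, hYv]
  module

theorem integral_norm_smul_add_one_sub_smul_sq_le (hX : MemLp X 2 P) (hY : MemLp Y 2 P)
    (ht : t ∈ Set.Icc (0 : ℝ) 1) :
    ∫ ω, ‖t • X ω + (1 - t) • Y ω‖ ^ 2 ∂P ≤
      t * ∫ ω, ‖X ω‖ ^ 2 ∂P + (1 - t) * ∫ ω, ‖Y ω‖ ^ 2 ∂P := by
  have hX2 := hX.norm.integrable_sq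
  have hY2 := hY.norm.integrable_sq
  rw [← integral_const_mul, ← integral_const_mul,
    ← integral_add (hX2.const_mul t) (hY2.const_mul _)]
  exact integral_mono_of_nonneg (.of_forall fun _ ↦ by positivity)
    ((hX2.const_mul t).add (hY2.const_mul _))
    (.of_forall fun ω ↦ norm_smul_add_one_sub_smul_sq_le ht (X ω) (Y ω))

end ConvexCombination

theorem mixture_gradient_variance_bound_general
    {E : Type*} [NormedAddCommGroup E] [InnerProductSpace ℝ E]
    {Ω : Type*} [MeasurableSpace Ω] (P : Measure Ω) [IsProbabilityMeasure P]
    (v : E) (g_id g_fr g_uf : Ω → E)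
    (hid2 : MemLp g_id 2 P) (hfr2 : MemLp g_fr 2 P) (huf2 : MemLp g_uf 2 P)
    (hid_mean : ∫ ω, g_id ω ∂P = v)
    (hfr_mean : ∫ ω, g_fr ω ∂P = v)
    (huf_mean : ∫ ω, g_uf ω ∂P = v)
    (σ ε ν : ℝ)
    (hid_var : ∫ ω, ‖g_id ω - v‖ ^ 2 ∂P ≤ σ ^ 2)
    (hfr_var : ∫ ω, ‖g_fr ω - v‖ ^ 2 ∂P ≤ ε / 2 * ‖v‖ ^ 2 + σ ^ 2)
    (huf_var : ∫ ω, ‖g_uf ω - v‖ ^ 2 ∂P ≤ ν / 2 * ‖v‖ ^ 2 + σ ^ 2)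
    (lam τ : ℝ) (hlam : lam ∈ Set.Icc (0 : ℝ) 1) (hτ : τ ∈ Set.Icc (0 : ℝ) 1)
    (g : Ω → E)
    (hg : g = fun ω => lam • g_id ω + (1 - lam) • (τ • g_fr ω + (1 - τ) • g_uf ω)) :
    (∫ ω, g ω ∂P = v) ∧
      ∫ ω, ‖g ω - v‖ ^ 2 ∂P ≤
        (1 - lam) * (τ * ε + (1 - τ) * ν) / 2 * ‖v‖ ^ 2 + σ ^ 2 := by
  subst hg
  have hfr1 := hfr2.integrable one_le_two
  have huf1 := huf2.integrable one_le_two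
  refine ⟨integral_smul_add_one_sub_smul_of_integral_eq (hid2.integrable one_le_two)
    ((hfr1.smul τ).add (huf1.smul _)) hid_mean
    (integral_smul_add_one_sub_smul_of_integral_eq hfr1 huf1 hfr_mean huf_mean), ?_⟩
  have hid_c := hid2.sub (memLp_const v)
  have hfr_c := hfr2.sub (memLp_const v)
  have huf_c := huf2.sub (memLp_const v)
  have hfr_uf := integral_norm_smul_add_one_sub_smul_sq_le hfr_c huf_c hτ
  have hmix := integral_norm_smul_add_one_sub_smul_sq_le hid_c
    ((hfr_c.const_smul τ).add (huf_c.const_smul (1 - τ))) hlam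
  simp only [Pi.add_apply, Pi.sub_apply, Pi.smul_apply] at hfr_uf hmix
  have hcentered : ∀ ω, lam • g_id ω + (1 - lam) • (τ • g_fr ω + (1 - τ) • g_uf ω) - v =
      lam • (g_id ω - v) + (1 - lam) • (τ • (g_fr ω - v) + (1 - τ) • (g_uf ω - v)) :=
    fun ω ↦ by module
  calc ∫ ω, ‖lam • g_id ω + (1 - lam) • (τ • g_fr ω + (1 - τ) • g_uf ω) - v‖ ^ 2 ∂P
      ≤ lam * σ ^ 2 + (1 - lam) *
          (τ * (ε / 2 * ‖v‖ ^ 2 + σ ^ 2) + (1 - τ) * (ν / 2 * ‖v‖ ^ 2 + σ ^ 2)) := by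
        simp only [hcentered]
        refine hmix.trans (add_le_add (by gcongr; exact hlam.1)
          (mul_le_mul_of_nonneg_left ?_ (sub_nonneg.2 hlam.2)))
        exact hfr_uf.trans (add_le_add (by gcongr; exact hτ.1)
          (mul_le_mul_of_nonneg_left huf_var (sub_nonneg.2 hτ.2)))
    _ = (1 - lam) * (τ * ε + (1 - τ) * ν) / 2 * ‖v‖ ^ 2 + σ ^ 2 := by ring

/-- Variance bound for the mixture stochastic gradient
`g = λ g_id + (1−λ)(τ g_fr + (1−τ) g_uf)`. -/
theorem mixture_gradient_variance_bound
    {E : Type*} [NormedAddCommGroup E] [InnerProductSpace ℝ E] [CompleteSpace E]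
    {Ω : Type*} [MeasurableSpace Ω] (P : Measure Ω) [IsProbabilityMeasure P]
    (v : E) (g_id g_fr g_uf : Ω → E)
    (hid2 : MemLp g_id 2 P) (hfr2 : MemLp g_fr 2 P) (huf2 : MemLp g_uf 2 P)
    (hid_mean : ∫ ω, g_id ω ∂P = v)
    (hfr_mean : ∫ ω, g_fr ω ∂P = v)
    (huf_mean : ∫ ω, g_uf ω ∂P = v)
    (σ ε ν : ℝ) (hσ : 0 ≤ σ) (hε : 0 ≤ ε) (hν : 0 ≤ ν)
    (hid_var : ∫ ω, ‖g_id ω - v‖ ^ 2 ∂P ≤ σ ^ 2)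
    (hfr_var : ∫ ω, ‖g_fr ω - v‖ ^ 2 ∂P ≤ ε / 2 * ‖v‖ ^ 2 + σ ^ 2)
    (huf_var : ∫ ω, ‖g_uf ω - v‖ ^ 2 ∂P ≤ ν / 2 * ‖v‖ ^ 2 + σ ^ 2)
    (lam τ : ℝ) (hlam : lam ∈ Set.Icc (0 : ℝ) 1) (hτ : τ ∈ Set.Icc (0 : ℝ) 1)
    (g : Ω → E)
    (hg : g = fun ω => lam • g_id ω + (1 - lam) • (τ • g_fr ω + (1 - τ) • g_uf ω)) :
    (∫ ω, g ω ∂P = v) ∧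
      ∫ ω, ‖g ω - v‖ ^ 2 ∂P ≤
        (1 - lam) * (τ * ε + (1 - τ) * ν) / 2 * ‖v‖ ^ 2 + σ ^ 2 :=
  mixture_gradient_variance_bound_general P v g_id g_fr g_uf hid2 hfr2 huf2 hid_mean hfr_mean
    huf_mean σ ε ν hid_var hfr_var huf_var lam τ hlam hτ g hg
end
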